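/- arXiv:2212.02376 — 3 statements merged into one kernel-verified Lean document; each statement's English description precedes it below -/
import Mathlib

section
/- For all x ∈ E and y ∈ F, ‖∇̄f(x, y) − ∇̄f(x, y*(x))‖ ≤ L_f ‖y*(x) − y‖, where L_f := L_{fx} + L_{fy} C_{gxy}/μ_g + C_{fy}(L_{gxy}/μ_g + L_{gyy} C_{gxy}/μ_g²). In particular, since ∇̄f(x, y*(x)) equals the gradient ∇l(x) of l(x) := f(x, y*(x)), the surrogate gradient satisfies ‖∇̄f(x,y) − ∇l(x)‖ ≤ L_f ‖y*(x) − y‖. -/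
/-!
Strong convexity of `g(x, ·)` makes `y ↦ ∇_y g(x, y)` `μ_g`-strongly monotone, so every Hessian
`H = ∇²_{yy} g(x, y)` satisfies `⟪H v, v⟫ ≥ μ_g ‖v‖²`; it is therefore invertible with
`‖H⁻¹‖ ≤ 1 / μ_g`. Writing `∇̄f = ∇_x f − A K v` with `A = ∇²_{xy} g`, `K = H⁻¹`, `v = ∇_y f`,
the difference between two values of `y` splits as
`(A − A') K v + A' (K − K') v + A' K' (v − v')` with `K − K' = K (H' − H) K'`,
and each piece is Lipschitz in `y` with the constants making up `L_f`.

For the second claim, strong monotonicity makes `y*(x)` the only zero of `∇_y g(x, ·)`, so `y*`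
agrees with the implicit function of `∇_y g = 0`, whose derivative is `−H⁻¹ ∘ ∂_x ∇_y g`.
The chain rule and the symmetry of `H` then turn `∇l(x)` into `∇̄f(x, y*(x))`.
-/

open scoped RealInnerProductSpace

noncomputable section

variable {E F : Type*} [NormedAddCommGroup E] [InnerProductSpace ℝ E] [FiniteDimensional ℝ E]
  [NormedAddCommGroup F] [InnerProductSpace ℝ F] [FiniteDimensional ℝ F]

/-- Gradient of `f(·, y)` at `x`. -/
def gradx (f : E × F → ℝ) (x : E) (y : F) : E := gradient (fun x' => f (x', y)) x

/-- Gradient of `f(x, ·)` at `y`. -/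
def grady (f : E × F → ℝ) (x : E) (y : F) : F := gradient (fun y' => f (x, y')) y

/-- Hessian of `g(x, ·)` at `y`, as a continuous linear map `F →L[ℝ] F`. -/
def hessyy (g : E × F → ℝ) (x : E) (y : F) : F →L[ℝ] F :=
  fderiv ℝ (fun y' => grady g x y') y

/-- Mixed second derivative `∇²_{xy} g(x,y) : F →L[ℝ] E`, the adjoint of the derivative at `x`
of the map `x ↦ ∇_y g(x,y)`. -/
def hessxy (g : E × F → ℝ) (x : E) (y : F) : F →L[ℝ] E :=
  ContinuousLinearMap.adjoint (fderiv ℝ (fun x' => grady g x' y) x)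

/-- The surrogate (hyper)gradient
`∇̄f(x,y) = ∇_x f(x,y) − ∇²_{xy} g(x,y) ([∇²_{yy} g(x,y)]⁻¹ (∇_y f(x,y)))`. -/
def barGrad (f g : E × F → ℝ) (x : E) (y : F) : E :=
  gradx f x y - hessxy g x y (Ring.inverse (hessyy g x y) (grady f x y))

set_option linter.unusedSectionVars false

open ContinuousLinearMap

section StrongMonotonicity

variable {V : Type*} [NormedAddCommGroup V] [InnerProductSpace ℝ V]

def IsStronglyMonotone (μ : ℝ) (T : V → V) : Prop :=
  ∀ a b, μ * ‖a - b‖ ^ 2 ≤ ⟪T a - T b, a - b⟫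

theorem ConvexOn.inner_gradient_sub_gradient_nonneg [CompleteSpace V] {φ : V → ℝ} {φ' : V → V}
    (hφ : ConvexOn ℝ Set.univ φ) (hφ' : ∀ y, HasGradientAt φ (φ' y) y) (a b : V) :
    0 ≤ ⟪φ' a - φ' b, a - b⟫ := by
  set line : ℝ →ᵃ[ℝ] V := AffineMap.lineMap b a
  have hline : ∀ t, HasDerivAt (φ ∘ line) ⟪φ' (line t), a - b⟫ t := fun t => by
    have := (hφ' (line t)).hasFDerivAt.comp_hasDerivAt t (AffineMap.hasDerivAt_lineMap (x := t))
    simpa using this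
  have hconv : ConvexOn ℝ Set.univ (φ ∘ line) := hφ.comp_affineMap line
  have h01 := (hconv.le_slope_of_hasDerivAt trivial trivial one_pos (hline 0)).trans
    (hconv.slope_le_of_hasDerivAt trivial trivial one_pos (hline 1))
  simp only [line, AffineMap.lineMap_apply_zero, AffineMap.lineMap_apply_one] at h01
  rw [inner_sub_left]
  linarith

theorem ConvexOn.isStronglyMonotone_gradient [CompleteSpace V] {φ : V → ℝ} {φ' : V → V} {μ : ℝ}
    (hφ : ConvexOn ℝ Set.univ (fun y => φ y - μ / 2 * ‖y‖ ^ 2))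
    (hφ' : ∀ y, HasGradientAt φ (φ' y) y) : IsStronglyMonotone μ φ' := by
  intro a b
  have hgrad : ∀ y, HasGradientAt (fun y => φ y - μ / 2 * ‖y‖ ^ 2) (φ' y - μ • y) y := by
    intro y
    rw [hasGradientAt_iff_hasFDerivAt, map_sub]
    refine ((hφ' y).hasFDerivAt.sub
      ((hasStrictFDerivAt_norm_sq y).hasFDerivAt.const_mul (μ / 2))).congr_fderiv ?_
    congr 1
    ext v
    simp only [smul_apply, coe_innerSL_apply, nsmul_eq_mul, Nat.cast_ofNat, smul_eq_mul, map_smul,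
      InnerProductSpace.toDual_apply_apply]
    ring
  have := hφ.inner_gradient_sub_gradient_nonneg hgrad a b
  have hsplit : φ' a - μ • a - (φ' b - μ • b) = (φ' a - φ' b) - μ • (a - b) := by module
  rw [hsplit, inner_sub_left, real_inner_smul_left, real_inner_self_eq_norm_sq] at this
  linarith

namespace IsStronglyMonotone

variable {μ : ℝ} {T : V → V}

theorem injective (hT : IsStronglyMonotone μ T) (hμ : 0 < μ) : Function.Injective T := by
  intro a b hab
  have := hT a b
  rw [hab, sub_self, inner_zero_left] at this
  have : ‖a - b‖ ^ 2 ≤ 0 := by nlinarith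
  simpa [sub_eq_zero] using this

theorem le_inner_apply_self_of_hasFDerivAt (hT : IsStronglyMonotone μ T) {H : V →L[ℝ] V} {y : V}
    (hH : HasFDerivAt T H y) (v : V) : μ * ‖v‖ ^ 2 ≤ ⟪H v, v⟫ := by
  set ψ : ℝ → ℝ := fun t => ⟪T (y + t • v), v⟫ - μ * ‖v‖ ^ 2 * t
  have hψ : HasDerivAt ψ (⟪H v, v⟫ - μ * ‖v‖ ^ 2) 0 := by
    have hline : HasDerivAt (fun t : ℝ => y + t • v) v 0 := by
      simpa using ((hasDerivAt_id (0 : ℝ)).smul_const v).const_add y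
    have hT' := hH.comp_hasDerivAt_of_eq 0 hline (by simp)
    exact ((hT'.inner ℝ (hasDerivAt_const 0 v)).sub ((hasDerivAt_id 0).const_mul _)).congr_deriv
      (by simp)
  have hmono : Monotone ψ := by
    intro s t hst
    rcases hst.eq_or_lt with rfl | hlt
    · rfl
    have h := hT (y + t • v) (y + s • v)
    rw [add_sub_add_left_eq_sub, ← sub_smul, norm_smul, real_inner_smul_right, mul_pow,
      Real.norm_eq_abs, sq_abs, inner_sub_left] at h
    have : μ * ‖v‖ ^ 2 * (t - s) ≤ ⟪T (y + t • v), v⟫ - ⟪T (y + s • v), v⟫ :=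
      le_of_mul_le_mul_left (by linarith) (sub_pos.mpr hlt)
    simp only [ψ]
    linarith
  have := hψ.deriv ▸ hmono.deriv_nonneg (x := 0)
  linarith

end IsStronglyMonotone

end StrongMonotonicity

theorem Ring.norm_inverse_sub_inverse_le {R : Type*} [NormedRing R] {a b : R}
    (h : IsUnit a ↔ IsUnit b) :
    ‖Ring.inverse a - Ring.inverse b‖ ≤ ‖Ring.inverse a‖ * ‖b - a‖ * ‖Ring.inverse b‖ :=
  Ring.inverse_sub_inverse h ▸ norm_mul₃_le

namespace ContinuousLinearMap

theorem norm_apply_apply_sub_apply_apply_le {𝕜 X Y Z : Type*}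
    [NontriviallyNormedField 𝕜] [NormedAddCommGroup X] [NormedSpace 𝕜 X]
    [NormedAddCommGroup Y] [NormedSpace 𝕜 Y] [NormedAddCommGroup Z] [NormedSpace 𝕜 Z]
    (A₁ A₂ : Y →L[𝕜] Z) (K₁ K₂ : X →L[𝕜] Y) (v₁ v₂ : X) :
    ‖A₁ (K₁ v₁) - A₂ (K₂ v₂)‖ ≤
      ‖A₁ - A₂‖ * ‖K₁‖ * ‖v₁‖ + ‖A₂‖ * ‖K₁ - K₂‖ * ‖v₁‖ + ‖A₂‖ * ‖K₂‖ * ‖v₁ - v₂‖ := by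
  have hsplit : A₁ (K₁ v₁) - A₂ (K₂ v₂) =
      (A₁ - A₂) (K₁ v₁) + A₂ ((K₁ - K₂) v₁) + A₂ (K₂ (v₁ - v₂)) := by
    simp only [sub_apply, map_sub]
    abel
  rw [hsplit]
  refine norm_add₃_le.trans (add_le_add_three ?_ ?_ ?_) <;> rw [mul_assoc] <;>
    exact le_opNorm_of_le _ (le_opNorm _ _)

theorem isInvertible_of_isUnit {𝕜 X : Type*} [NontriviallyNormedField 𝕜]
    [NormedAddCommGroup X] [NormedSpace 𝕜 X] {H : X →L[𝕜] X} (hH : IsUnit H) :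
    H.IsInvertible := by
  obtain ⟨u, rfl⟩ := hH
  exact ⟨ContinuousLinearEquiv.unitsEquiv 𝕜 X u, rfl⟩

variable {V : Type*} [NormedAddCommGroup V] [InnerProductSpace ℝ V] {μ : ℝ} {H : V →L[ℝ] V}

theorem mul_norm_le_norm_apply_of_le_inner (hH : ∀ v, μ * ‖v‖ ^ 2 ≤ ⟪H v, v⟫) (v : V) :
    μ * ‖v‖ ≤ ‖H v‖ := by
  rcases (norm_nonneg v).eq_or_lt with hv | hv
  · simp [← hv]
  refine le_of_mul_le_mul_right ?_ hv
  calc μ * ‖v‖ * ‖v‖ = μ * ‖v‖ ^ 2 := by ring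
    _ ≤ ⟪H v, v⟫ := hH v
    _ ≤ ‖H v‖ * ‖v‖ := real_inner_le_norm _ _

variable [FiniteDimensional ℝ V]

theorem isUnit_of_le_inner (hμ : 0 < μ) (hH : ∀ v, μ * ‖v‖ ^ 2 ≤ ⟪H v, v⟫) : IsUnit H := by
  have hinj : Function.Injective H := by
    refine (injective_iff_map_eq_zero H).mpr fun v hv => ?_
    have := mul_norm_le_norm_apply_of_le_inner hH v
    rw [hv, norm_zero] at this
    exact norm_le_zero_iff.mp (nonpos_of_mul_nonpos_right this hμ)
  exact isUnit_iff_bijective.mpr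
    ⟨hinj, LinearMap.injective_iff_surjective (f := (H : V →ₗ[ℝ] V)) |>.mp hinj⟩

theorem norm_ringInverse_le_of_le_inner (hμ : 0 < μ) (hH : ∀ v, μ * ‖v‖ ^ 2 ≤ ⟪H v, v⟫) :
    ‖Ring.inverse H‖ ≤ μ⁻¹ := by
  refine opNorm_le_bound _ (inv_nonneg.mpr hμ.le) fun w => ?_
  have hw : H (Ring.inverse H w) = w :=
    congr($(Ring.mul_inverse_cancel H (isUnit_of_le_inner hμ hH)) w)
  have := mul_norm_le_norm_apply_of_le_inner hH (Ring.inverse H w)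
  rw [hw] at this
  rwa [inv_mul_eq_div, le_div_iff₀' hμ]

end ContinuousLinearMap

theorem HasStrictFDerivAt.hasStrictFDerivAt_of_apply_prodMk_eq {𝕜 E₁ E₂ G : Type*}
    [NontriviallyNormedField 𝕜] [NormedAddCommGroup E₁] [NormedSpace 𝕜 E₁] [CompleteSpace E₁]
    [NormedAddCommGroup E₂] [NormedSpace 𝕜 E₂] [CompleteSpace E₂]
    [NormedAddCommGroup G] [NormedSpace 𝕜 G] [CompleteSpace G]
    {Φ : E₁ × E₂ → G} {T : E₁ × E₂ →L[𝕜] G} {ψ : E₁ → E₂} {x₀ : E₁}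
    (hΦ : HasStrictFDerivAt Φ T (x₀, ψ x₀)) (hT : (T ∘L inr 𝕜 E₁ E₂).IsInvertible)
    (hinj : ∀ x, Function.Injective fun y => Φ (x, y))
    (hψ : ∀ x, Φ (x, ψ x) = Φ (x₀, ψ x₀)) :
    HasStrictFDerivAt ψ (-(T ∘L inr 𝕜 E₁ E₂).inverse ∘L (T ∘L inl 𝕜 E₁ E₂)) x₀ := by
  refine (hΦ.hasStrictFDerivAt_implicitFunctionOfProdDomain hT).congr_of_eventuallyEq ?_
  filter_upwards [hΦ.eventually_apply_implicitFunctionOfProdDomain hT] with x hx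
  exact hinj x (hx.trans (hψ x).symm)

section PartialDerivatives

variable {𝕜 X Y Z : Type*} [NontriviallyNormedField 𝕜] [NormedAddCommGroup X] [NormedSpace 𝕜 X]
  [NormedAddCommGroup Y] [NormedSpace 𝕜 Y] [NormedAddCommGroup Z] [NormedSpace 𝕜 Z]
  {h : X × Y → Z} {x : X} {y : Y}

theorem DifferentiableAt.fderiv_partial_fst (hh : DifferentiableAt 𝕜 h (x, y)) :
    fderiv 𝕜 (fun x' => h (x', y)) x = fderiv 𝕜 h (x, y) ∘L inl 𝕜 X Y :=
  (hh.hasFDerivAt.comp x (hasFDerivAt_prodMk_left x y)).fderiv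

theorem DifferentiableAt.fderiv_partial_snd (hh : DifferentiableAt 𝕜 h (x, y)) :
    fderiv 𝕜 (fun y' => h (x, y')) y = fderiv 𝕜 h (x, y) ∘L inr 𝕜 X Y :=
  (hh.hasFDerivAt.comp y (hasFDerivAt_prodMk_right x y)).fderiv

end PartialDerivatives

theorem inner_gradx {f : E × F → ℝ} {x : E} {y : F} (hf : DifferentiableAt ℝ f (x, y)) (u : E) :
    ⟪gradx f x y, u⟫ = fderiv ℝ f (x, y) (u, 0) := by
  rw [gradx, gradient, InnerProductSpace.toDual_symm_apply, hf.fderiv_partial_fst]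
  rfl

theorem inner_grady {f : E × F → ℝ} {x : E} {y : F} (hf : DifferentiableAt ℝ f (x, y)) (v : F) :
    ⟪grady f x y, v⟫ = fderiv ℝ f (x, y) (0, v) := by
  rw [grady, gradient, InnerProductSpace.toDual_symm_apply, hf.fderiv_partial_snd]
  rfl

theorem gradient_comp_prodMk {f : E × F → ℝ} {ψ : E → F} {D : E →L[ℝ] F} {x : E}
    (hf : DifferentiableAt ℝ f (x, ψ x)) (hψ : HasFDerivAt ψ D x) :
    gradient (fun x' => f (x', ψ x')) x = gradx f x (ψ x) + adjoint D (grady f x (ψ x)) := by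
  have hl : HasFDerivAt (fun x' => f (x', ψ x'))
      (fderiv ℝ f (x, ψ x) ∘L (ContinuousLinearMap.id ℝ E).prod D) x :=
    hf.hasFDerivAt.comp x ((hasFDerivAt_id x).prodMk hψ)
  refine ext_inner_right ℝ fun u => ?_
  rw [gradient, InnerProductSpace.toDual_symm_apply, hl.fderiv, inner_add_left,
    adjoint_inner_left, inner_gradx hf, inner_grady hf, ← map_add]
  simp

section Hessians

variable {g : E × F → ℝ}

theorem hasGradientAt_grady (hg : Differentiable ℝ g) (x : E) (y : F) :
    HasGradientAt (fun y' => g (x, y')) (grady g x y) y :=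
  (hg.comp (differentiable_const x |>.prodMk differentiable_id) y).hasGradientAt

theorem contDiff_grady (hg : ContDiff ℝ 2 g) : ContDiff ℝ 1 fun p : E × F => grady g p.1 p.2 := by
  have hfun : (fun p : E × F => grady g p.1 p.2) =
      fun p => (InnerProductSpace.toDual ℝ F).symm (fderiv ℝ g p ∘L inr ℝ E F) := by
    funext ⟨x, y⟩
    rw [grady, gradient, (hg.differentiable two_ne_zero (x, y)).fderiv_partial_snd]
  rw [hfun]
  exact (InnerProductSpace.toDual ℝ F).symm.contDiff.comp
    (((compL ℝ F (E × F) ℝ).flip (inr ℝ E F)).contDiff.comp (hg.fderiv_right le_rfl))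

theorem hasFDerivAt_grady_right (hg : ContDiff ℝ 2 g) (x : E) (y : F) :
    HasFDerivAt (grady g x) (hessyy g x y) y :=
  (((contDiff_grady hg).differentiable one_ne_zero).comp
    (differentiable_const x |>.prodMk differentiable_id) y).hasFDerivAt

theorem hessyy_eq_fderiv_comp_inr (hg : ContDiff ℝ 2 g) (x : E) (y : F) :
    hessyy g x y = fderiv ℝ (fun p : E × F => grady g p.1 p.2) (x, y) ∘L inr ℝ E F :=
  ((contDiff_grady hg).differentiable one_ne_zero (x, y)).fderiv_partial_snd

theorem hessxy_eq_adjoint_fderiv_comp_inl (hg : ContDiff ℝ 2 g) (x : E) (y : F) :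
    hessxy g x y = adjoint (fderiv ℝ (fun p : E × F => grady g p.1 p.2) (x, y) ∘L inl ℝ E F) := by
  rw [hessxy, ((contDiff_grady hg).differentiable one_ne_zero (x, y)).fderiv_partial_fst]

theorem isSelfAdjoint_hessyy (hg : ContDiff ℝ 2 g) (x : E) (y : F) :
    IsSelfAdjoint (hessyy g x y) := by
  rw [isSelfAdjoint_iff_isSymmetric]
  intro a b
  have hfst : ∀ y', HasFDerivAt (fun y'' => g (x, y'')) (innerSL ℝ (grady g x y')) y' :=
    fun y' => (hasGradientAt_grady (hg.differentiable two_ne_zero) x y').hasFDerivAt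
  have hsnd := (innerSL ℝ).hasFDerivAt.comp y (hasFDerivAt_grady_right hg x y)
  change ⟪hessyy g x y a, b⟫ = ⟪a, hessyy g x y b⟫
  rw [real_inner_comm (hessyy g x y b)]
  exact second_derivative_symmetric hfst hsnd a b

variable {μ : ℝ}

theorem isStronglyMonotone_grady (hg : Differentiable ℝ g) {x : E}
    (hsc : ConvexOn ℝ Set.univ fun y => g (x, y) - μ / 2 * ‖y‖ ^ 2) :
    IsStronglyMonotone μ (grady g x) :=
  hsc.isStronglyMonotone_gradient (hasGradientAt_grady hg x)

theorem le_inner_hessyy_apply_self (hg : ContDiff ℝ 2 g) {x : E}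
    (hsc : ConvexOn ℝ Set.univ fun y => g (x, y) - μ / 2 * ‖y‖ ^ 2) (y v : F) :
    μ * ‖v‖ ^ 2 ≤ ⟪hessyy g x y v, v⟫ :=
  (isStronglyMonotone_grady (hg.differentiable two_ne_zero) hsc).le_inner_apply_self_of_hasFDerivAt
    (hasFDerivAt_grady_right hg x y) v

theorem grady_eq_zero_of_forall_le {x : E} {y : F} (hmin : ∀ y', g (x, y) ≤ g (x, y')) :
    grady g x y = 0 := by
  have hloc : IsLocalMin (fun y' => g (x, y')) y := Filter.Eventually.of_forall hmin
  rw [grady, gradient, hloc.fderiv_eq_zero, map_zero]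

end Hessians

theorem gradient_comp_argmin_eq_barGrad {f g : E × F → ℝ} {ystar : E → F} {μ : ℝ} {x : E}
    (hf : DifferentiableAt ℝ f (x, ystar x)) (hg : ContDiff ℝ 2 g) (hμ : 0 < μ)
    (hsc : ∀ x : E, ConvexOn ℝ Set.univ fun y : F => g (x, y) - μ / 2 * ‖y‖ ^ 2)
    (hmin : ∀ x y, g (x, ystar x) ≤ g (x, y)) :
    gradient (fun x' => f (x', ystar x')) x = barGrad f g x (ystar x) := by
  set T := fderiv ℝ (fun p : E × F => grady g p.1 p.2) (x, ystar x)
  have hH : T ∘L inr ℝ E F = hessyy g x (ystar x) := (hessyy_eq_fderiv_comp_inr hg x _).symm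
  have hT : (T ∘L inr ℝ E F).IsInvertible := hH ▸ isInvertible_of_isUnit
    (isUnit_of_le_inner hμ (le_inner_hessyy_apply_self hg (hsc x) (ystar x)))
  have hgrady : ∀ x', grady g x' (ystar x') = 0 := fun x' =>
    grady_eq_zero_of_forall_le (hmin x')
  have hΦ : HasStrictFDerivAt (fun p : E × F => grady g p.1 p.2) T (x, ystar x) :=
    (contDiff_grady hg).contDiffAt.hasStrictFDerivAt one_ne_zero
  have hystar := hΦ.hasStrictFDerivAt_of_apply_prodMk_eq hT
    (fun x' => (isStronglyMonotone_grady (hg.differentiable two_ne_zero) (hsc x')).injective hμ)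
    (fun x' => by simp only [hgrady])
  rw [gradient_comp_prodMk hf hystar.hasFDerivAt, hH, ← ringInverse_eq_inverse, barGrad,
    hessxy_eq_adjoint_fderiv_comp_inl hg, map_neg, adjoint_comp,
    (isSelfAdjoint_hessyy hg x (ystar x)).ringInverse.adjoint_eq]
  simp [T, sub_eq_add_neg]

theorem norm_barGrad_sub_barGrad_le {f g : E × F → ℝ} {Lfx Lfy Cfy μ Lgxy Lgyy Cgxy : ℝ}
    (hfx : ∀ p q : E × F, ‖gradx f p.1 p.2 - gradx f q.1 q.2‖ ≤ Lfx * ‖p - q‖)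
    (hfy : ∀ p q : E × F, ‖grady f p.1 p.2 - grady f q.1 q.2‖ ≤ Lfy * ‖p - q‖)
    (hfyb : ∀ x y, ‖grady f x y‖ ≤ Cfy) (hg : ContDiff ℝ 2 g) (hμ : 0 < μ) {x : E}
    (hsc : ConvexOn ℝ Set.univ fun y : F => g (x, y) - μ / 2 * ‖y‖ ^ 2)
    (hgxy : ∀ p q : E × F, ‖hessxy g p.1 p.2 - hessxy g q.1 q.2‖ ≤ Lgxy * ‖p - q‖)
    (hgyy : ∀ p q : E × F, ‖hessyy g p.1 p.2 - hessyy g q.1 q.2‖ ≤ Lgyy * ‖p - q‖)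
    (hgxyb : ∀ x y, ‖hessxy g x y‖ ≤ Cgxy) (y y' : F) :
    ‖barGrad f g x y - barGrad f g x y'‖ ≤
      (Lfx + Lfy * Cgxy / μ + Cfy * (Lgxy / μ + Lgyy * Cgxy / μ ^ 2)) * ‖y' - y‖ := by
  set d := ‖y' - y‖
  have hd : ∀ z z' : F, ‖((x, z) : E × F) - (x, z')‖ = ‖z - z'‖ := by simp [Prod.norm_def]
  set K := fun z => Ring.inverse (hessyy g x z)
  have hunit : ∀ z, IsUnit (hessyy g x z) := fun z =>
    isUnit_of_le_inner hμ (le_inner_hessyy_apply_self hg hsc z)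
  have hK : ∀ z, ‖K z‖ ≤ μ⁻¹ := fun z =>
    norm_ringInverse_le_of_le_inner hμ (le_inner_hessyy_apply_self hg hsc z)
  have hKy := hK y
  have hKy' := hK y'
  have hfyb' := hfyb x y
  have hgxyb' := hgxyb x y'
  have hfx' : ‖gradx f x y - gradx f x y'‖ ≤ Lfx * d := by
    simpa [hd, norm_sub_rev y] using hfx (x, y) (x, y')
  have hfy' : ‖grady f x y - grady f x y'‖ ≤ Lfy * d := by
    simpa [hd, norm_sub_rev y] using hfy (x, y) (x, y')
  have hgxy' : ‖hessxy g x y - hessxy g x y'‖ ≤ Lgxy * d := by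
    simpa [hd, norm_sub_rev y] using hgxy (x, y) (x, y')
  have hgyy' : ‖hessyy g x y' - hessyy g x y‖ ≤ Lgyy * d := by
    simpa [hd] using hgyy (x, y') (x, y)
  have hLgyy : 0 ≤ Lgyy * d := (norm_nonneg _).trans hgyy'
  have hK' : ‖K y - K y'‖ ≤ μ⁻¹ * (Lgyy * d) * μ⁻¹ :=
    (Ring.norm_inverse_sub_inverse_le (iff_of_true (hunit y) (hunit y'))).trans
      (by gcongr)
  have hLgxy : 0 ≤ Lgxy * d := (norm_nonneg _).trans hgxy'
  have hCgxy : 0 ≤ Cgxy := (norm_nonneg _).trans (hgxyb x y)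
  calc ‖barGrad f g x y - barGrad f g x y'‖
      = ‖(gradx f x y - gradx f x y') - (hessxy g x y (K y (grady f x y)) -
          hessxy g x y' (K y' (grady f x y')))‖ := by
        rw [barGrad, barGrad, sub_sub_sub_comm]
    _ ≤ ‖gradx f x y - gradx f x y'‖ + (‖hessxy g x y - hessxy g x y'‖ * ‖K y‖ * ‖grady f x y‖ +
          ‖hessxy g x y'‖ * ‖K y - K y'‖ * ‖grady f x y‖ +
          ‖hessxy g x y'‖ * ‖K y'‖ * ‖grady f x y - grady f x y'‖) :=
        (norm_sub_le _ _).trans (add_le_add_right (norm_apply_apply_sub_apply_apply_le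
          (hessxy g x y) (hessxy g x y') (K y) (K y') (grady f x y) (grady f x y')) _)
    _ ≤ Lfx * d + (Lgxy * d * μ⁻¹ * Cfy + Cgxy * (μ⁻¹ * (Lgyy * d) * μ⁻¹) * Cfy +
          Cgxy * μ⁻¹ * (Lfy * d)) := by
        gcongr
    _ = (Lfx + Lfy * Cgxy / μ + Cfy * (Lgxy / μ + Lgyy * Cgxy / μ ^ 2)) * d := by
        field_simp
        ring

theorem surrogate_gradient_error_bound_general
    (f g : E × F → ℝ) (ystar : E → F)
    (Lfx Lfy Cfy μg Lgxy Lgyy Cgxy Lf : ℝ)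
    (hf : ContDiff ℝ 1 f)
    (hfx : ∀ p q : E × F, ‖gradx f p.1 p.2 - gradx f q.1 q.2‖ ≤ Lfx * ‖p - q‖)
    (hfy : ∀ p q : E × F, ‖grady f p.1 p.2 - grady f q.1 q.2‖ ≤ Lfy * ‖p - q‖)
    (hfyb : ∀ x y, ‖grady f x y‖ ≤ Cfy)
    (hg : ContDiff ℝ 2 g)
    (hμ : 0 < μg)
    (hsc : ∀ x : E, ConvexOn ℝ Set.univ (fun y : F => g (x, y) - μg / 2 * ‖y‖ ^ 2))
    (hgxy : ∀ p q : E × F, ‖hessxy g p.1 p.2 - hessxy g q.1 q.2‖ ≤ Lgxy * ‖p - q‖)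
    (hgyy : ∀ p q : E × F, ‖hessyy g p.1 p.2 - hessyy g q.1 q.2‖ ≤ Lgyy * ‖p - q‖)
    (hgxyb : ∀ x y, ‖hessxy g x y‖ ≤ Cgxy)
    (hmin : ∀ x y, g (x, ystar x) ≤ g (x, y))
    (hLf : Lf = Lfx + Lfy * Cgxy / μg + Cfy * (Lgxy / μg + Lgyy * Cgxy / μg ^ 2)) :
    (∀ (x : E) (y : F), ‖barGrad f g x y - barGrad f g x (ystar x)‖ ≤ Lf * ‖ystar x - y‖) ∧
    (∀ (x : E) (y : F),
      ‖barGrad f g x y - gradient (fun x' => f (x', ystar x')) x‖ ≤ Lf * ‖ystar x - y‖) := by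
  have hbound (x : E) (y : F) :
      ‖barGrad f g x y - barGrad f g x (ystar x)‖ ≤ Lf * ‖ystar x - y‖ :=
    hLf ▸ norm_barGrad_sub_barGrad_le hfx hfy hfyb hg hμ (hsc x) hgxy hgyy hgxyb y (ystar x)
  refine ⟨hbound, fun x y => ?_⟩
  rw [gradient_comp_argmin_eq_barGrad (hf.differentiable one_ne_zero _) hg hμ hsc hmin]
  exact hbound x y

/-- Lemma 1 (first claim): `‖∇̄f(x,y) − ∇̄f(x,y*(x))‖ ≤ L_f ‖y*(x) − y‖`, and in particular,
since `∇̄f(x, y*(x)) = ∇l(x)` with `l(x) = f(x, y*(x))`, also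
`‖∇̄f(x,y) − ∇l(x)‖ ≤ L_f ‖y*(x) − y‖`. -/
theorem surrogate_gradient_error_bound
    (f g : E × F → ℝ) (ystar : E → F)
    (Lfx Lfy Cfy Lg μg Lgxy Lgyy Cgxy Lf : ℝ)
    (hf : ContDiff ℝ 1 f)
    (hfx : ∀ p q : E × F, ‖gradx f p.1 p.2 - gradx f q.1 q.2‖ ≤ Lfx * ‖p - q‖)
    (hfy : ∀ p q : E × F, ‖grady f p.1 p.2 - grady f q.1 q.2‖ ≤ Lfy * ‖p - q‖)
    (hfyb : ∀ x y, ‖grady f x y‖ ≤ Cfy)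
    (hg : ContDiff ℝ 2 g)
    (hgy : ∀ p q : E × F, ‖grady g p.1 p.2 - grady g q.1 q.2‖ ≤ Lg * ‖p - q‖)
    (hμ : 0 < μg)
    (hsc : ∀ x : E, ConvexOn ℝ Set.univ (fun y : F => g (x, y) - μg / 2 * ‖y‖ ^ 2))
    (hgxy : ∀ p q : E × F, ‖hessxy g p.1 p.2 - hessxy g q.1 q.2‖ ≤ Lgxy * ‖p - q‖)
    (hgyy : ∀ p q : E × F, ‖hessyy g p.1 p.2 - hessyy g q.1 q.2‖ ≤ Lgyy * ‖p - q‖)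
    (hgxyb : ∀ x y, ‖hessxy g x y‖ ≤ Cgxy)
    (hmin : ∀ x y, g (x, ystar x) ≤ g (x, y))
    (huniq : ∀ x y, (∀ z, g (x, y) ≤ g (x, z)) → y = ystar x)
    (hLf : Lf = Lfx + Lfy * Cgxy / μg + Cfy * (Lgxy / μg + Lgyy * Cgxy / μg ^ 2)) :
    (∀ (x : E) (y : F), ‖barGrad f g x y - barGrad f g x (ystar x)‖ ≤ Lf * ‖ystar x - y‖) ∧
    (∀ (x : E) (y : F),
      ‖barGrad f g x y - gradient (fun x' => f (x', ystar x')) x‖ ≤ Lf * ‖ystar x - y‖) :=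
  surrogate_gradient_error_bound_general f g ystar Lfx Lfy Cfy μg Lgxy Lgyy Cgxy Lf hf hfx hfy hfyb
    hg hμ hsc hgxy hgyy hgxyb hmin hLf
end
end

section
/- Let (Ω, 𝒜, P) be a probability space, E and F finite-dimensional real inner product spaces, w : E × F → F, and G : E × F × Ω → F such that for every (x, y) the map ω ↦ G(x, y, ω) is square-integrable with mean ∫ G(x, y, ω) dP(ω) = w(x, y) and variance ∫ ‖G(x, y, ω) − w(x, y)‖² dP(ω) ≤ σ_g², and such that for P-almost every ω, ‖G(x₁, y₁, ω) − G(x₂, y₂, ω)‖² ≤ 2 L_g² (‖x₁ − x₂‖² + ‖y₁ − y₂‖²) for all (x₁, y₁), (x₂, y₂). Fix x, x⁺ ∈ E, y ∈ F, e ∈ F, v := w(x, y) + e, β ≥ 0, γ ∈ [0, 1], set y⁺ := y − β v, and define e⁺(ω) := G(x⁺, y⁺, ω) + (1 − γ)(v − G(x, y, ω)) − w(x⁺, y⁺). Then ∫ ‖e⁺(ω)‖² dP(ω) ≤ (1 − γ)²(1 + 8 L_g² β²) ‖e‖² + 4(1 − γ)² L_g² ‖x⁺ − x‖² + 2γ²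 σ_g² + 8(1 − γ)² L_g² β² ‖w(x, y)‖². -/
/-!
Write `D` and `D⁺` for the centred sampling noise at `(x, y)` and `(x⁺, y⁺)`. Then
`e⁺ = (1 - γ) e + Z` with `Z = D⁺ - (1 - γ) D` of mean zero, so `E‖e⁺‖² = (1 - γ)² ‖e‖² + E‖Z‖²`.
Splitting `Z = (1 - γ) (D⁺ - D) + γ D⁺` gives `E‖Z‖² ≤ 2 (1 - γ)² E‖D⁺ - D‖² + 2 γ² σ²`, and
`E‖D⁺ - D‖²`, the variance of `G(x⁺, y⁺) - G(x, y)`, is at most its second moment, which the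
sample-wise Lipschitz bound controls by `2 L² (‖x⁺ - x‖² + β² ‖v‖²)`, with
`‖v‖² ≤ 2 ‖w(x, y)‖² + 2 ‖e‖²`.
-/

open MeasureTheory

theorem norm_add_sq_le {F : Type*} [SeminormedAddCommGroup F] (a b : F) :
    ‖a + b‖ ^ 2 ≤ 2 * (‖a‖ ^ 2 + ‖b‖ ^ 2) :=
  (pow_le_pow_left₀ (norm_nonneg _) (norm_add_le a b) 2).trans add_sq_le

section SecondMoment

variable {Ω F : Type*} [MeasurableSpace Ω] {P : Measure Ω} [IsProbabilityMeasure P]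
  [NormedAddCommGroup F]

theorem integral_norm_sq_le_of_ae_le {X : Ω → F} {C : ℝ} (hX : ∀ᵐ ω ∂P, ‖X ω‖ ^ 2 ≤ C) :
    ∫ ω, ‖X ω‖ ^ 2 ∂P ≤ C := by
  simpa using integral_mono_of_nonneg (ae_of_all _ fun ω => sq_nonneg ‖X ω‖)
    (integrable_const C) hX

variable [InnerProductSpace ℝ F] [CompleteSpace F]

theorem integral_sub_integral_eq_zero {X : Ω → F} (hX : Integrable X P) :
    ∫ ω, (X ω - ∫ ω', X ω' ∂P) ∂P = 0 := by
  rw [integral_sub hX (integrable_const _), integral_const, probReal_univ, one_smul, sub_self]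

theorem integral_norm_add_sq_of_integral_eq_zero (c : F) {Z : Ω → F} (hZ : MemLp Z 2 P)
    (hZ0 : ∫ ω, Z ω ∂P = 0) :
    ∫ ω, ‖c + Z ω‖ ^ 2 ∂P = ‖c‖ ^ 2 + ∫ ω, ‖Z ω‖ ^ 2 ∂P := by
  have hZ1 : Integrable Z P := hZ.integrable one_le_two
  have hcross : Integrable (fun ω => 2 * inner ℝ c (Z ω)) P := (hZ1.const_inner c).const_mul 2
  have hlin : Integrable (fun ω => ‖c‖ ^ 2 + 2 * inner ℝ c (Z ω)) P :=
    (integrable_const _).add hcross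
  simp_rw [norm_add_sq_real]
  rw [integral_add hlin (hZ.integrable_norm_pow two_ne_zero),
    integral_add (integrable_const _) hcross, integral_const_mul, integral_inner hZ1, hZ0,
    inner_zero_right, integral_const, probReal_univ]
  simp

theorem integral_norm_sub_integral_sq_le {X : Ω → F} (hX : MemLp X 2 P) :
    ∫ ω, ‖X ω - ∫ ω', X ω' ∂P‖ ^ 2 ∂P ≤ ∫ ω, ‖X ω‖ ^ 2 ∂P := by
  have hsplit := integral_norm_add_sq_of_integral_eq_zero (∫ ω, X ω ∂P)
    (hX.sub (memLp_const _)) (integral_sub_integral_eq_zero (hX.integrable one_le_two))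
  simp only [Pi.sub_apply, add_sub_cancel] at hsplit
  rw [hsplit]
  exact le_add_of_nonneg_left (sq_nonneg _)

theorem integral_norm_add_sub_smul_sq_le (c : F) (γ : ℝ) {D D' : Ω → F} (hD : MemLp D 2 P)
    (hD' : MemLp D' 2 P) (hD0 : ∫ ω, D ω ∂P = 0) (hD'0 : ∫ ω, D' ω ∂P = 0) :
    ∫ ω, ‖c + (D' ω - (1 - γ) • D ω)‖ ^ 2 ∂P ≤
      ‖c‖ ^ 2 + 2 * (1 - γ) ^ 2 * ∫ ω, ‖D' ω - D ω‖ ^ 2 ∂P + 2 * γ ^ 2 * ∫ ω, ‖D' ω‖ ^ 2 ∂P := by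
  have hZ : MemLp (fun ω => D' ω - (1 - γ) • D ω) 2 P := hD'.sub (hD.const_smul _)
  have hZ0 : ∫ ω, (D' ω - (1 - γ) • D ω) ∂P = 0 := by
    have hsD : Integrable (fun ω => (1 - γ) • D ω) P := (hD.integrable one_le_two).smul _
    rw [integral_sub (hD'.integrable one_le_two) hsD, integral_smul, hD0, hD'0, smul_zero,
      sub_zero]
  have hpoint : ∀ ω, ‖D' ω - (1 - γ) • D ω‖ ^ 2 ≤
      2 * (1 - γ) ^ 2 * ‖D' ω - D ω‖ ^ 2 + 2 * γ ^ 2 * ‖D' ω‖ ^ 2 := fun ω => by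
    have := norm_add_sq_le ((1 - γ) • (D' ω - D ω)) (γ • D' ω)
    rw [show (1 - γ) • (D' ω - D ω) + γ • D' ω = D' ω - (1 - γ) • D ω by module] at this
    simp only [norm_smul, mul_pow, Real.norm_eq_abs, sq_abs] at this
    linarith
  have hdiff : Integrable (fun ω => 2 * (1 - γ) ^ 2 * ‖D' ω - D ω‖ ^ 2) P :=
    ((hD'.sub hD).integrable_norm_pow two_ne_zero).const_mul _
  have hD'sq : Integrable (fun ω => 2 * γ ^ 2 * ‖D' ω‖ ^ 2) P :=
    (hD'.integrable_norm_pow two_ne_zero).const_mul _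
  rw [integral_norm_add_sq_of_integral_eq_zero c hZ hZ0, add_assoc, ← integral_const_mul,
    ← integral_const_mul, ← integral_add hdiff hD'sq]
  exact add_le_add_right (integral_mono (hZ.integrable_norm_pow two_ne_zero) (hdiff.add hD'sq)
    hpoint) _

end SecondMoment


theorem lower_momentum_error_shrink_general
    {E F Ω : Type*} [NormedAddCommGroup E]
    [NormedAddCommGroup F] [InnerProductSpace ℝ F] [FiniteDimensional ℝ F]
    [MeasurableSpace Ω] (P : Measure Ω) [IsProbabilityMeasure P]
    (w : E → F → F) (G : E → F → Ω → F) (σg Lg : ℝ)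
    (hL2 : ∀ (x : E) (y : F), MemLp (fun ω => G x y ω) 2 P)
    (hmean : ∀ (x : E) (y : F), ∫ ω, G x y ω ∂P = w x y)
    (hvar : ∀ (x : E) (y : F), ∫ ω, ‖G x y ω - w x y‖ ^ 2 ∂P ≤ σg ^ 2)
    (hlip : ∀ᵐ ω ∂P, ∀ (x₁ x₂ : E) (y₁ y₂ : F),
      ‖G x₁ y₁ ω - G x₂ y₂ ω‖ ^ 2 ≤ 2 * Lg ^ 2 * (‖x₁ - x₂‖ ^ 2 + ‖y₁ - y₂‖ ^ 2))
    (x xplus : E) (y e : F) (β γ : ℝ)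
    (v : F) (hv : v = w x y + e)
    (yplus : F) (hyplus : yplus = y - β • v)
    (eplus : Ω → F)
    (heplus : ∀ ω, eplus ω = G xplus yplus ω + (1 - γ) • (v - G x y ω) - w xplus yplus) :
    ∫ ω, ‖eplus ω‖ ^ 2 ∂P ≤
      (1 - γ) ^ 2 * (1 + 8 * Lg ^ 2 * β ^ 2) * ‖e‖ ^ 2 +
        4 * (1 - γ) ^ 2 * Lg ^ 2 * ‖xplus - x‖ ^ 2 + 2 * γ ^ 2 * σg ^ 2 +
        8 * (1 - γ) ^ 2 * Lg ^ 2 * β ^ 2 * ‖w x y‖ ^ 2 := by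
  have hnoise : ∀ x y, MemLp (fun ω => G x y ω - w x y) 2 P :=
    fun x y => (hL2 x y).sub (memLp_const _)
  have hcentred : ∀ x y, ∫ ω, (G x y ω - w x y) ∂P = 0 := fun x y => by
    rw [← hmean x y]; exact integral_sub_integral_eq_zero ((hL2 x y).integrable one_le_two)
  have hsplit : ∀ ω, eplus ω = (1 - γ) • e +
      ((G xplus yplus ω - w xplus yplus) - (1 - γ) • (G x y ω - w x y)) := fun ω => by
    rw [heplus, hv]; module
  have hincrement : ∫ ω, ‖(G xplus yplus ω - w xplus yplus) - (G x y ω - w x y)‖ ^ 2 ∂P ≤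
      2 * Lg ^ 2 * (‖xplus - x‖ ^ 2 + β ^ 2 * ‖v‖ ^ 2) :=
    calc _ = ∫ ω, ‖(G xplus yplus ω - G x y ω) -
          ∫ ω', (G xplus yplus ω' - G x y ω') ∂P‖ ^ 2 ∂P := by
          rw [integral_sub ((hL2 _ _).integrable one_le_two) ((hL2 _ _).integrable one_le_two),
            hmean, hmean]
          simp_rw [sub_sub_sub_comm]
      _ ≤ ∫ ω, ‖G xplus yplus ω - G x y ω‖ ^ 2 ∂P :=
          integral_norm_sub_integral_sq_le ((hL2 _ _).sub (hL2 _ _))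
      _ ≤ 2 * Lg ^ 2 * (‖xplus - x‖ ^ 2 + ‖yplus - y‖ ^ 2) :=
          integral_norm_sq_le_of_ae_le (hlip.mono fun ω h => h _ _ _ _)
      _ = 2 * Lg ^ 2 * (‖xplus - x‖ ^ 2 + β ^ 2 * ‖v‖ ^ 2) := by
          rw [hyplus, sub_sub_cancel_left, norm_neg, norm_smul, mul_pow, Real.norm_eq_abs, sq_abs]
  have hv_sq : ‖v‖ ^ 2 ≤ 2 * (‖w x y‖ ^ 2 + ‖e‖ ^ 2) := hv ▸ norm_add_sq_le _ _
  calc ∫ ω, ‖eplus ω‖ ^ 2 ∂P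
      = ∫ ω, ‖(1 - γ) • e +
          ((G xplus yplus ω - w xplus yplus) - (1 - γ) • (G x y ω - w x y))‖ ^ 2 ∂P := by
        simp_rw [hsplit]
    _ ≤ ‖(1 - γ) • e‖ ^ 2 +
          2 * (1 - γ) ^ 2 * ∫ ω, ‖(G xplus yplus ω - w xplus yplus) - (G x y ω - w x y)‖ ^ 2 ∂P +
          2 * γ ^ 2 * ∫ ω, ‖G xplus yplus ω - w xplus yplus‖ ^ 2 ∂P :=
        integral_norm_add_sub_smul_sq_le _ γ (hnoise x y) (hnoise xplus yplus) (hcentred x y)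
          (hcentred xplus yplus)
    _ ≤ (1 - γ) ^ 2 * ‖e‖ ^ 2 +
          2 * (1 - γ) ^ 2 * (2 * Lg ^ 2 * (‖xplus - x‖ ^ 2 +
            β ^ 2 * (2 * (‖w x y‖ ^ 2 + ‖e‖ ^ 2)))) + 2 * γ ^ 2 * σg ^ 2 := by
        rw [norm_smul, mul_pow, Real.norm_eq_abs, sq_abs]
        gcongr
        · exact hincrement.trans (by gcongr)
        · exact hvar _ _
    _ = _ := by ring

/-- Lemma 7 (single agent, one step): shrinking rate of the lower-level momentum-based
stochastic gradient estimation error. -/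
theorem lower_momentum_error_shrink
    {E F Ω : Type*} [NormedAddCommGroup E] [InnerProductSpace ℝ E] [FiniteDimensional ℝ E]
    [NormedAddCommGroup F] [InnerProductSpace ℝ F] [FiniteDimensional ℝ F]
    [MeasurableSpace Ω] (P : Measure Ω) [IsProbabilityMeasure P]
    (w : E → F → F) (G : E → F → Ω → F) (σg Lg : ℝ)
    (hL2 : ∀ (x : E) (y : F), MemLp (fun ω => G x y ω) 2 P)
    (hmean : ∀ (x : E) (y : F), ∫ ω, G x y ω ∂P = w x y)
    (hvar : ∀ (x : E) (y : F), ∫ ω, ‖G x y ω - w x y‖ ^ 2 ∂P ≤ σg ^ 2)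
    (hlip : ∀ᵐ ω ∂P, ∀ (x₁ x₂ : E) (y₁ y₂ : F),
      ‖G x₁ y₁ ω - G x₂ y₂ ω‖ ^ 2 ≤ 2 * Lg ^ 2 * (‖x₁ - x₂‖ ^ 2 + ‖y₁ - y₂‖ ^ 2))
    (x xplus : E) (y e : F) (β γ : ℝ)
    (hβ : 0 ≤ β) (hγ0 : 0 ≤ γ) (hγ1 : γ ≤ 1)
    (v : F) (hv : v = w x y + e)
    (yplus : F) (hyplus : yplus = y - β • v)
    (eplus : Ω → F)
    (heplus : ∀ ω, eplus ω = G xplus yplus ω + (1 - γ) • (v - G x y ω) - w xplus yplus) :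
    ∫ ω, ‖eplus ω‖ ^ 2 ∂P ≤
      (1 - γ) ^ 2 * (1 + 8 * Lg ^ 2 * β ^ 2) * ‖e‖ ^ 2 +
        4 * (1 - γ) ^ 2 * Lg ^ 2 * ‖xplus - x‖ ^ 2 + 2 * γ ^ 2 * σg ^ 2 +
        8 * (1 - γ) ^ 2 * Lg ^ 2 * β ^ 2 * ‖w x y‖ ^ 2 :=
  lower_momentum_error_shrink_general P w G σg Lg hL2 hmean hvar hlip x xplus y e β γ v hv yplus
    hyplus eplus heplus
end

section
/- Let M be a real m × m matrix, x₁,…,x_m, u₁,…,u_m ∈ E, x̄ := (1/m)∑_i x_i, ū := (1/m)∑_i u_i, α ≥ 0, and 0 ≤ λ ≤ 1. Assume M is doubly stochastic (all row sums and column sums equal 1) and satisfies the mixing property: for every v : {1,…,m} → E with ∑_i v_i = 0, ∑_i ‖∑_j M_{ij} • v_j‖² ≤ λ² ∑_i ‖v_i‖². Define x⁺_i := ∑_j M_{ij} • x_j − α u_i. Then ∑_{i=1}^m ‖x⁺_i − x_i‖² ≤ 8 ∑_{i=1}^m ‖x_i − x̄‖² + 4α² ∑_{i=1}^m ‖u_i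 − ū‖² + 4α² m ‖ū‖². -/
/-!
Subtracting `x̄` from `Σⱼ Mᵢⱼ • xⱼ` leaves `Σⱼ Mᵢⱼ • (xⱼ - x̄)` because the rows of `M` sum to one,
and the deviations `xⱼ - x̄` sum to zero, so the mixing property shows that the consensus error
does not grow under `M`. Writing
`x⁺ᵢ - xᵢ = Σⱼ Mᵢⱼ • (xⱼ - x̄) - (xᵢ - x̄) - α • (uᵢ - ū) - α • ū`
and bounding the square of a sum of four norms by four times the sum of their squares gives the
constants `4 + 4 = 8`, `4 α²` and `4 α² m`.
-/

open Finset

theorem norm_sum_sq_le_card_mul {ι E : Type*} [SeminormedAddCommGroup E] (s : Finset ι)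
    (f : ι → E) : ‖∑ i ∈ s, f i‖ ^ 2 ≤ #s * ∑ i ∈ s, ‖f i‖ ^ 2 :=
  (pow_le_pow_left₀ (norm_nonneg _) (norm_sum_le s f) 2).trans sq_sum_le_card_mul_sum_sq

theorem norm_add_add_add_sq_le {E : Type*} [SeminormedAddCommGroup E] (a b c d : E) :
    ‖a + b + c + d‖ ^ 2 ≤ 4 * (‖a‖ ^ 2 + ‖b‖ ^ 2 + ‖c‖ ^ 2 + ‖d‖ ^ 2) := by
  simpa [Fin.sum_univ_four, add_assoc] using norm_sum_sq_le_card_mul univ ![a, b, c, d]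

section Averaging

variable {ι E : Type*} [Fintype ι] [AddCommGroup E] [Module ℝ E]

theorem sum_sub_average_eq_zero (x : ι → E) :
    ∑ i, (x i - (1 / (Fintype.card ι : ℝ)) • ∑ j, x j) = 0 := by
  cases isEmpty_or_nonempty ι
  · simp
  · rw [sum_sub_distrib, sum_const, card_univ, ← Nat.cast_smul_eq_nsmul ℝ, smul_smul,
      mul_one_div_cancel (by positivity), one_smul, sub_self]

theorem sum_smul_sub_of_sum_eq_one {w : ι → ℝ} (hw : ∑ j, w j = 1) (x : ι → E) (c : E) :
    ∑ j, w j • (x j - c) = (∑ j, w j • x j) - c := by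
  simp only [smul_sub, sum_sub_distrib, ← sum_smul, hw, one_smul]

end Averaging

theorem sum_norm_mix_sub_average_sq_le {ι E : Type*} [Fintype ι] [SeminormedAddCommGroup E]
    [NormedSpace ℝ E] (M : Matrix ι ι ℝ) (hrow : ∀ i, ∑ j, M i j = 1) (lam : ℝ)
    (hlam : lam ^ 2 ≤ 1)
    (hmix : ∀ v : ι → E, ∑ i, v i = 0 → ∑ i, ‖∑ j, M i j • v j‖ ^ 2 ≤ lam ^ 2 * ∑ i, ‖v i‖ ^ 2)
    (x : ι → E) :
    ∑ i, ‖(∑ j, M i j • x j) - (1 / (Fintype.card ι : ℝ)) • ∑ j, x j‖ ^ 2 ≤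
      ∑ i, ‖x i - (1 / (Fintype.card ι : ℝ)) • ∑ j, x j‖ ^ 2 := by
  set xbar := (1 / (Fintype.card ι : ℝ)) • ∑ j, x j
  calc ∑ i, ‖(∑ j, M i j • x j) - xbar‖ ^ 2
      = ∑ i, ‖∑ j, M i j • (x j - xbar)‖ ^ 2 := by
        simp only [sum_smul_sub_of_sum_eq_one (hrow _)]
    _ ≤ lam ^ 2 * ∑ i, ‖x i - xbar‖ ^ 2 := hmix _ (sum_sub_average_eq_zero x)
    _ ≤ ∑ i, ‖x i - xbar‖ ^ 2 :=
        mul_le_of_le_one_left (sum_nonneg fun _ _ => sq_nonneg _) hlam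

theorem iterate_movement_bound_general
    {E : Type*} [NormedAddCommGroup E] [InnerProductSpace ℝ E]
    (m : ℕ) (M : Matrix (Fin m) (Fin m) ℝ)
    (hrow : ∀ i, ∑ j, M i j = 1)
    (lam : ℝ) (hlam0 : 0 ≤ lam) (hlam1 : lam ≤ 1)
    (hmix : ∀ v : Fin m → E, (∑ i, v i) = 0 →
      ∑ i, ‖∑ j, M i j • v j‖ ^ 2 ≤ lam ^ 2 * ∑ i, ‖v i‖ ^ 2)
    (x u : Fin m → E) (α : ℝ)
    (xbar ubar : E)
    (hxbar : xbar = (1 / (m : ℝ)) • ∑ i, x i)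
    (xplus : Fin m → E) (hxplus : ∀ i, xplus i = (∑ j, M i j • x j) - α • u i) :
    ∑ i, ‖xplus i - x i‖ ^ 2 ≤
      8 * ∑ i, ‖x i - xbar‖ ^ 2 + 4 * α ^ 2 * ∑ i, ‖u i - ubar‖ ^ 2 +
        4 * α ^ 2 * (m : ℝ) * ‖ubar‖ ^ 2 := by
  have hmixed : ∑ i, ‖(∑ j, M i j • x j) - xbar‖ ^ 2 ≤ ∑ i, ‖x i - xbar‖ ^ 2 := by
    simpa only [hxbar, Fintype.card_fin] using
      sum_norm_mix_sub_average_sq_le M hrow lam (pow_le_one₀ hlam0 hlam1) hmix x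
  have hstep : ∀ i, ‖xplus i - x i‖ ^ 2 ≤ 4 * ‖(∑ j, M i j • x j) - xbar‖ ^ 2 +
      4 * ‖x i - xbar‖ ^ 2 + 4 * α ^ 2 * ‖u i - ubar‖ ^ 2 + 4 * α ^ 2 * ‖ubar‖ ^ 2 := by
    intro i
    have hsplit : xplus i - x i = ((∑ j, M i j • x j) - xbar) + -(x i - xbar) +
        -(α • (u i - ubar)) + -(α • ubar) := by
      rw [hxplus]; module
    have := norm_add_add_add_sq_le ((∑ j, M i j • x j) - xbar) (-(x i - xbar))
      (-(α • (u i - ubar))) (-(α • ubar))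
    simp only [← hsplit, norm_neg, norm_smul, mul_pow, Real.norm_eq_abs, sq_abs] at this
    linarith
  calc ∑ i, ‖xplus i - x i‖ ^ 2
      ≤ ∑ i, (4 * ‖(∑ j, M i j • x j) - xbar‖ ^ 2 + 4 * ‖x i - xbar‖ ^ 2 +
          4 * α ^ 2 * ‖u i - ubar‖ ^ 2 + 4 * α ^ 2 * ‖ubar‖ ^ 2) := sum_le_sum fun i _ => hstep i
    _ = 4 * ∑ i, ‖(∑ j, M i j • x j) - xbar‖ ^ 2 + 4 * ∑ i, ‖x i - xbar‖ ^ 2 +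
          4 * α ^ 2 * ∑ i, ‖u i - ubar‖ ^ 2 + 4 * α ^ 2 * (m : ℝ) * ‖ubar‖ ^ 2 := by
      simp only [sum_add_distrib, ← mul_sum, sum_const, card_univ, Fintype.card_fin, nsmul_eq_mul]
      ring
    _ ≤ _ := by linarith

/-- Lemma 9 (third claim): bound on the total squared movement of the upper-level iterates
over one consensus-plus-gradient step. -/
theorem iterate_movement_bound
    {E : Type*} [NormedAddCommGroup E] [InnerProductSpace ℝ E] [FiniteDimensional ℝ E]
    (m : ℕ) (hm : 0 < m) (M : Matrix (Fin m) (Fin m) ℝ)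
    (hrow : ∀ i, ∑ j, M i j = 1) (hcol : ∀ j, ∑ i, M i j = 1)
    (lam : ℝ) (hlam0 : 0 ≤ lam) (hlam1 : lam ≤ 1)
    (hmix : ∀ v : Fin m → E, (∑ i, v i) = 0 →
      ∑ i, ‖∑ j, M i j • v j‖ ^ 2 ≤ lam ^ 2 * ∑ i, ‖v i‖ ^ 2)
    (x u : Fin m → E) (α : ℝ) (hα : 0 ≤ α)
    (xbar ubar : E)
    (hxbar : xbar = (1 / (m : ℝ)) • ∑ i, x i)
    (hubar : ubar = (1 / (m : ℝ)) • ∑ i, u i)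
    (xplus : Fin m → E) (hxplus : ∀ i, xplus i = (∑ j, M i j • x j) - α • u i) :
    ∑ i, ‖xplus i - x i‖ ^ 2 ≤
      8 * ∑ i, ‖x i - xbar‖ ^ 2 + 4 * α ^ 2 * ∑ i, ‖u i - ubar‖ ^ 2 +
        4 * α ^ 2 * (m : ℝ) * ‖ubar‖ ^ 2 :=
  iterate_movement_bound_general m M hrow lam hlam0 hlam1 hmix x u α xbar ubar hxbar xplus hxplus
end
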